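/- (Theorem 4) Let (G_k,y) be a weakly reversible mass-action system admitting a positive complex-balanced equilibrium x* ∈ ℝ^n_{>0}. Let x ∈ ℝ^n_{>0} with z := ln(x/x*) ∉ S^⊥, and let f ∈ ℝ^n be such that u · f < 0 for every chain graph G_ℰ with z ∈ C_ℰ and every u ∈ C_ℰ \ S^⊥. Then z · f < 0. -/

import Mathlib

open Matrix BigOperators Finset

variable {V : Type*}

/-- Directed reachability in the digraph with edge set `F`. -/
def dReach (F : Finset (V × V)) : V → V → Prop :=
  Relation.ReflTransGen fun a b => (a, b) ∈ F

/-- Reachability in the underlying undirected graph of the digraph with edge set `F`. -/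
def uReach (F : Finset (V × V)) : V → V → Prop :=
  Relation.ReflTransGen fun a b => (a, b) ∈ F ∨ (b, a) ∈ F

/-- A digraph is strongly connected if every vertex reaches every other vertex. -/
def StronglyConnected (F : Finset (V × V)) : Prop :=
  ∀ i j : V, dReach F i j

/-- A simple digraph has no self-loops. -/
def NoSelfLoops (F : Finset (V × V)) : Prop :=
  ∀ e ∈ F, e.1 ≠ e.2

/-- The edge set `F` contains a directed cycle. -/
def HasDirectedCycle (F : Finset (V × V)) : Prop :=
  ∃ v : V, Relation.TransGen (fun a b => (a, b) ∈ F) v v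

/-- The Laplacian matrix `A_k` of the labeled digraph `(V, F, k)`:
`(A_k)_{i,j} = k_{j→i}` if `(j→i) ∈ F`, `(A_k)_{i,i} = -∑_{(i→j)∈F} k_{i→j}`, and `0` otherwise. -/
noncomputable def LaplacianMatrix [Fintype V] [DecidableEq V]
    (F : Finset (V × V)) (k : V × V → ℝ) : Matrix V V ℝ :=
  Matrix.of fun i j =>
    if i = j then -(∑ e ∈ F.filter (fun e => e.1 = i), k e)
    else if (j, i) ∈ F then k (j, i) else 0

/-- `T` is a directed spanning tree of the strongly connected digraph `E`, rooted at `i`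
and directed towards the root: no directed cycle, and every vertex except `i`
is the source of exactly one edge. -/
def IsSpanningTreeTo [DecidableEq V] (E : Finset (V × V)) (i : V)
    (T : Finset (V × V)) : Prop :=
  T ⊆ E ∧ ¬ HasDirectedCycle T ∧
    ∀ j : V, j ≠ i → (T.filter (fun e => e.1 = j)).card = 1

open scoped Classical in
/-- The tree constant `(K_k)_i = ∑_{T ∈ T_i} ∏_{(j→j')∈T} k_{j→j'}`. -/
noncomputable def treeConst [Fintype V] [DecidableEq V]
    (E : Finset (V × V)) (k : V × V → ℝ) (i : V) : ℝ :=
  ∑ T ∈ E.powerset.filter (fun T => IsSpanningTreeTo E i T), ∏ e ∈ T, k e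

/-- The incidence matrix of the digraph with edge set `F`: in the column of edge `(j→j')`,
entry `-1` in row `j`, entry `+1` in row `j'`, and `0` elsewhere. -/
noncomputable def incidence [DecidableEq V] (F : Finset (V × V)) :
    Matrix V {e : V × V // e ∈ F} ℝ :=
  Matrix.of fun i e =>
    (if (e : V × V).2 = i then (1 : ℝ) else 0) - (if (e : V × V).1 = i then (1 : ℝ) else 0)

/-- Every connected component of the digraph is strongly connected: whenever `j` is reachable
from `i` in the underlying undirected graph, it is reachable by a directed path. -/
def WeaklyReversible {V : Type*} (F : Finset (V × V)) : Prop :=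
  ∀ i j : V, uReach F i j → dReach F i j

/-- The underlying undirected simple graph of the digraph with edge set `F`. -/
def toSimpleGraph {V : Type*} (F : Finset (V × V)) : SimpleGraph V :=
  SimpleGraph.fromRel fun a b => (a, b) ∈ F

/-- `F` is an auxiliary digraph for the digraph `E`: its connected components are directed
trees on the vertex sets of the connected components of `E`. That is, `F` has no self-loops
and no pair of opposite edges, its underlying undirected graph is acyclic (a forest), and
its connected components coincide with those of `E`. -/
def IsAuxiliary {V : Type*} (E F : Finset (V × V)) : Prop :=
  NoSelfLoops F ∧ (∀ a b : V, (a, b) ∈ F → (b, a) ∉ F) ∧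
    (toSimpleGraph F).IsAcyclic ∧ (∀ i j : V, uReach F i j ↔ uReach E i j)

/-- `F` is a chain graph for `E`: an auxiliary digraph each of whose components is a chain
`i_1 → i_2 → … → i_m` on the corresponding component of `E`; equivalently, an auxiliary
digraph in which every vertex has out-degree at most one and in-degree at most one. -/
def IsChainGraphOn {V : Type*} [DecidableEq V] (E F : Finset (V × V)) : Prop :=
  IsAuxiliary E F ∧ (∀ v : V, (F.filter (fun e => e.1 = v)).card ≤ 1) ∧
    (∀ v : V, (F.filter (fun e => e.2 = v)).card ≤ 1)

/-- `F` is a star graph for `E`: an auxiliary digraph each of whose components is a star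
`i_1 → i_m, …, i_{m-1} → i_m` on the corresponding component of `E`; equivalently, an
auxiliary digraph in which all edges of one component share the same target (the root). -/
def IsStarGraphOn {V : Type*} (E F : Finset (V × V)) : Prop :=
  IsAuxiliary E F ∧ ∀ e ∈ F, ∀ e' ∈ F, uReach F e.2 e'.2 → e.2 = e'.2

/-- `T` is a directed spanning tree, rooted at `i` and directed towards the root, of the
connected component of `i` in the digraph `E`: no directed cycle, every vertex of the
component except `i` is the source of exactly one edge, and vertices outside the component
are sources of no edge. -/
def IsCompSpanningTreeTo {V : Type*} [DecidableEq V] (E : Finset (V × V)) (i : V)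
    (T : Finset (V × V)) : Prop :=
  T ⊆ E ∧ ¬ HasDirectedCycle T ∧
    (∀ j : V, j ≠ i → uReach E j i → (T.filter (fun e => e.1 = j)).card = 1) ∧
    (∀ j : V, ¬ uReach E j i → (T.filter (fun e => e.1 = j)).card = 0)

open scoped Classical in
/-- The tree constants, given componentwise: on each component `V^λ`,
`(K_k)_i = ∑_{T ∈ T_i} ∏_{(j→j')∈T} k_{j→j'}` with `T_i` the set of directed spanning trees
of the component rooted at `i`, directed towards the root. -/
noncomputable def treeConstM {V : Type*} [Fintype V] [DecidableEq V]
    (E : Finset (V × V)) (k : V × V → ℝ) (i : V) : ℝ :=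
  ∑ T ∈ E.powerset.filter (fun T => IsCompSpanningTreeTo E i T), ∏ e ∈ T, k e

/-- The (generalized) monomial `x^{y(i)} = ∏_j x_j^{(y(i))_j}` (real exponentiation). -/
noncomputable def monomial {V : Type*} [Fintype V] {n : ℕ}
    (y : V → Fin n → ℝ) (x : Fin n → ℝ) (i : V) : ℝ :=
  ∏ j : Fin n, x j ^ y i j

/-- The matrix `Y ∈ ℝ^{n × V}` whose columns are the complexes `y(i)`. -/
noncomputable def complexMatrix {V : Type*} {n : ℕ} (y : V → Fin n → ℝ) :
    Matrix (Fin n) V ℝ :=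
  Matrix.of fun j i => y i j

/-- The mass-action vector field `f_k(x) = Y A_k x^Y`. -/
noncomputable def massActionField {V : Type*} [Fintype V] [DecidableEq V] {n : ℕ}
    (E : Finset (V × V)) (k : V × V → ℝ) (y : V → Fin n → ℝ) (x : Fin n → ℝ) :
    Fin n → ℝ :=
  (complexMatrix y).mulVec ((LaplacianMatrix E k).mulVec (monomial y x))

/-!
Order the complexes by `i ↦ y(i) · z`, breaking ties arbitrarily, and join every complex to the
next larger one of its connected component. This is a chain graph `G_ℰ` along whose edges
`y(i) · z` does not decrease, i.e. `z ∈ C_ℰ`. Since `z ∉ S^⊥`, the hypothesis on `f` applies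
to `u = z`.
-/

open Relation Function

lemma uReach_symm {F : Finset (V × V)} {a b : V} (h : uReach F a b) : uReach F b a :=
  ReflTransGen.mono (fun _ _ => Or.symm) _ _ (ReflTransGen.swap b a h)

/-- Both cycle neighbours of the `κ`-largest vertex of a cycle would be its predecessors. -/
lemma isAcyclic_toSimpleGraph_of_strictMono {α : Type*} [LinearOrder α] {F : Finset (V × V)}
    {κ : V → α} (hmono : ∀ e ∈ F, κ e.1 < κ e.2)
    (hpred : ∀ a a' b, (a, b) ∈ F → (a', b) ∈ F → a = a') :
    (toSimpleGraph F).IsAcyclic := by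
  classical
  intro v c hc
  obtain ⟨u, hu, hmax⟩ := c.support.toFinset.exists_max_image κ ⟨v, by simp⟩
  rw [List.mem_toFinset] at hu
  set c' := c.rotate u hu
  have hc' : c'.IsCycle := hc.rotate hu
  have hpredu : ∀ i, (toSimpleGraph F).Adj u (c'.getVert i) → (c'.getVert i, u) ∈ F := by
    intro i hadj
    refine ((SimpleGraph.fromRel_adj _ _ _).mp hadj).2.resolve_left fun h => ?_
    have hle := hmax _ (List.mem_toFinset.mpr
      ((c.mem_support_rotate_iff _ hu).mp (c'.getVert_mem_support i)))
    exact hle.not_gt (hmono _ h)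
  exact hc'.snd_ne_penultimate (hpred _ _ u (hpredu 1 (c'.adj_snd hc'.not_nil))
    (hpredu _ (c'.adj_penultimate hc'.not_nil).symm))

section ChainGraph

variable [Fintype V] {α : Type*} [LinearOrder α] {E : Finset (V × V)} {κ : V → α}

open scoped Classical in
noncomputable def chainGraph (E : Finset (V × V)) (κ : V → α) : Finset (V × V) :=
  univ.filter fun e => uReach E e.1 e.2 ∧ κ e.1 < κ e.2 ∧
    ∀ c, uReach E e.1 c → κ e.1 < κ c → κ e.2 ≤ κ c

lemma mem_chainGraph {e : V × V} : e ∈ chainGraph E κ ↔ uReach E e.1 e.2 ∧ κ e.1 < κ e.2 ∧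
    ∀ c, uReach E e.1 c → κ e.1 < κ c → κ e.2 ≤ κ c := by
  classical
  simp [chainGraph]

lemma fst_eq_of_mem_chainGraph (hκ : Injective κ) {a a' b : V}
    (h : (a, b) ∈ chainGraph E κ) (h' : (a', b) ∈ chainGraph E κ) : a = a' := by
  obtain ⟨hab, hlt, hmin⟩ := mem_chainGraph.mp h
  obtain ⟨hab', hlt', hmin'⟩ := mem_chainGraph.mp h'
  refine hκ (le_antisymm (not_lt.mp fun ha => ?_) (not_lt.mp fun ha' => ?_))
  · exact (hmin' a (hab'.trans (uReach_symm hab)) ha).not_gt hlt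
  · exact (hmin a' (hab.trans (uReach_symm hab')) ha').not_gt hlt'

lemma snd_eq_of_mem_chainGraph (hκ : Injective κ) {a b b' : V}
    (h : (a, b) ∈ chainGraph E κ) (h' : (a, b') ∈ chainGraph E κ) : b = b' := by
  obtain ⟨hab, hlt, hmin⟩ := mem_chainGraph.mp h
  obtain ⟨hab', hlt', hmin'⟩ := mem_chainGraph.mp h'
  exact hκ (le_antisymm (hmin b' hab' hlt') (hmin' b hab hlt))

lemma uReach_of_uReach_chainGraph {a b : V} (h : uReach (chainGraph E κ) a b) :
    uReach E a b :=
  reflTransGen_closed (fun _ _ hcd => hcd.elim (fun h => (mem_chainGraph.mp h).1)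
    fun h => uReach_symm (mem_chainGraph.mp h).1) a b h

lemma uReach_chainGraph_of_lt (hκ : Injective κ) {a b : V} (hab : uReach E a b)
    (hlt : κ a < κ b) : uReach (chainGraph E κ) a b := by
  induction hcard : {c | uReach E a c ∧ κ a < κ c}.ncard using Nat.strong_induction_on
    generalizing a with
  | _ m ih =>
  obtain ⟨s, ⟨has, hs⟩, hmin⟩ :=
    Set.exists_min_image {c | uReach E a c ∧ κ a < κ c} κ (Set.toFinite _) ⟨b, hab, hlt⟩
  have hstep : uReach (chainGraph E κ) a s :=
    .single (Or.inl (mem_chainGraph.mpr ⟨has, hs, fun c hc hc' => hmin c ⟨hc, hc'⟩⟩))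
  rcases (hmin b ⟨hab, hlt⟩).lt_or_eq with hsb | hsb
  · have hsub : {c | uReach E s c ∧ κ s < κ c} ⊂ {c | uReach E a c ∧ κ a < κ c} :=
      ⟨fun c hc => ⟨has.trans hc.1, hs.trans hc.2⟩, fun h => (h ⟨has, hs⟩).2.false⟩
    exact hstep.trans
      (ih _ (hcard ▸ Set.ncard_lt_ncard hsub) ((uReach_symm has).trans hab) hsb rfl)
  · rwa [hκ hsb] at hstep

lemma uReach_chainGraph_iff (hκ : Injective κ) {a b : V} :
    uReach (chainGraph E κ) a b ↔ uReach E a b := by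
  refine ⟨uReach_of_uReach_chainGraph, fun hab => ?_⟩
  rcases lt_trichotomy (κ a) (κ b) with h | h | h
  · exact uReach_chainGraph_of_lt hκ hab h
  · exact hκ h ▸ .refl
  · exact uReach_symm (uReach_chainGraph_of_lt hκ (uReach_symm hab) h)

lemma isChainGraphOn_chainGraph [DecidableEq V] (hκ : Injective κ) :
    IsChainGraphOn E (chainGraph E κ) := by
  have hmono : ∀ e ∈ chainGraph E κ, κ e.1 < κ e.2 := fun e he => (mem_chainGraph.mp he).2.1
  refine ⟨⟨?_, ?_, ?_, fun _ _ => uReach_chainGraph_iff hκ⟩, ?_, ?_⟩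
  · exact fun e he h => (h ▸ hmono e he).false
  · exact fun a b h h' => ((hmono _ h).trans (hmono _ h')).false
  · exact isAcyclic_toSimpleGraph_of_strictMono hmono fun _ _ _ => fst_eq_of_mem_chainGraph hκ
  · refine fun v => card_le_one.mpr ?_
    rintro ⟨a, b⟩ hmem ⟨a', b'⟩ hmem'
    obtain ⟨h, rfl⟩ := mem_filter.mp hmem
    obtain ⟨h', rfl⟩ := mem_filter.mp hmem'
    rw [snd_eq_of_mem_chainGraph hκ h h']
  · refine fun v => card_le_one.mpr ?_
    rintro ⟨a, b⟩ hmem ⟨a', b'⟩ hmem'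
    obtain ⟨h, rfl⟩ := mem_filter.mp hmem
    obtain ⟨h', rfl⟩ := mem_filter.mp hmem'
    rw [fst_eq_of_mem_chainGraph hκ h h']

end ChainGraph

lemma exists_isChainGraphOn_monotone [Fintype V] [DecidableEq V] {β : Type*} [LinearOrder β]
    (E : Finset (V × V)) (g : V → β) :
    ∃ F, IsChainGraphOn E F ∧ ∀ e ∈ F, g e.1 ≤ g e.2 := by
  let κ : V → β ×ₗ Fin (Fintype.card V) := fun a => toLex (g a, Fintype.equivFin V a)
  have hκ : Injective κ := fun a b h => (Fintype.equivFin V).injective (congrArg (ofLex · |>.2) h)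
  exact ⟨chainGraph E κ, isChainGraphOn_chainGraph hκ,
    fun e he => Prod.Lex.monotone_fst_ofLex (mem_chainGraph.mp he).2.1.le⟩

theorem binomial_differential_inclusion_lyapunov_general
    {V : Type*} [Fintype V] [DecidableEq V] {n : ℕ}
    (E : Finset (V × V))
    (y : V → Fin n → ℝ)
    (z : Fin n → ℝ)
    (hzS : ¬ (∀ s ∈ LinearMap.range (complexMatrix y * incidence E).mulVecLin,
      ∑ j : Fin n, z j * s j = 0))
    (f : Fin n → ℝ)
    (hf : ∀ F : Finset (V × V), IsChainGraphOn E F →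
      (∀ e ∈ F, 0 ≤ ∑ j : Fin n, (y e.2 j - y e.1 j) * z j) →
      ∀ u : Fin n → ℝ,
        (∀ e ∈ F, 0 ≤ ∑ j : Fin n, (y e.2 j - y e.1 j) * u j) →
        ¬ (∀ s ∈ LinearMap.range (complexMatrix y * incidence E).mulVecLin,
            ∑ j : Fin n, u j * s j = 0) →
        ∑ j : Fin n, u j * f j < 0) :
    ∑ j : Fin n, z j * f j < 0 := by
  obtain ⟨F, hF, hmono⟩ := exists_isChainGraphOn_monotone E fun i => ∑ j, y i j * z j
  have hzF : ∀ e ∈ F, 0 ≤ ∑ j : Fin n, (y e.2 j - y e.1 j) * z j := fun e he => by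
    simpa only [sub_mul, sum_sub_distrib, sub_nonneg] using hmono e he
  exact hf F hF hzF z hzF hzS

/-- (Theorem 4) Let `(G_k, y)` be a weakly reversible mass-action system admitting a positive
complex-balanced equilibrium `x*`. Let `x > 0` with `z := ln(x/x*) ∉ S^⊥`, and let `f` be such
that `u ⬝ f < 0` for every chain graph `G_ℰ` with `z ∈ C_ℰ` and every `u ∈ C_ℰ \ S^⊥`.
Then `z ⬝ f < 0`. -/
theorem binomial_differential_inclusion_lyapunov
    {V : Type*} [Fintype V] [DecidableEq V] {n : ℕ}
    (E : Finset (V × V)) (hloop : NoSelfLoops E)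
    (k : V × V → ℝ) (hk : ∀ e ∈ E, 0 < k e)
    (y : V → Fin n → ℝ) (hyinj : Function.Injective y) (hynn : ∀ i j, 0 ≤ y i j)
    (hwr : WeaklyReversible E)
    (xs : Fin n → ℝ) (hxs : ∀ j, 0 < xs j)
    (hcb : (LaplacianMatrix E k).mulVec (monomial y xs) = 0)
    (x : Fin n → ℝ) (hx : ∀ j, 0 < x j)
    (z : Fin n → ℝ) (hz : z = fun j => Real.log (x j / xs j))
    (hzS : ¬ (∀ s ∈ LinearMap.range (complexMatrix y * incidence E).mulVecLin,
      ∑ j : Fin n, z j * s j = 0))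
    (f : Fin n → ℝ)
    (hf : ∀ F : Finset (V × V), IsChainGraphOn E F →
      (∀ e ∈ F, 0 ≤ ∑ j : Fin n, (y e.2 j - y e.1 j) * z j) →
      ∀ u : Fin n → ℝ,
        (∀ e ∈ F, 0 ≤ ∑ j : Fin n, (y e.2 j - y e.1 j) * u j) →
        ¬ (∀ s ∈ LinearMap.range (complexMatrix y * incidence E).mulVecLin,
            ∑ j : Fin n, u j * s j = 0) →
        ∑ j : Fin n, u j * f j < 0) :
    ∑ j : Fin n, z j * f j < 0 :=
  binomial_differential_inclusion_lyapunov_general E y z hzS f hf
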